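/- Let Q be a forcing poset with greatest lower bounds, N a set, and q ∈ Q a strongly N-generic condition. Then q is a simple strongly N-generic condition. -/

import Mathlib

/-- Two conditions are compatible if they have a common lower bound. -/
def Compat {Q : Type*} [Preorder Q] (x y : Q) : Prop := ∃ z, z ≤ x ∧ z ≤ y

/-- Compatibility within a subposet `P`. -/
def CompatIn {Q : Type*} [Preorder Q] (P : Set Q) (x y : Q) : Prop :=
  ∃ z ∈ P, z ≤ x ∧ z ≤ y

/-- `A` is a maximal antichain of the subposet `P`. -/
def IsMaxAntichainIn {Q : Type*} [Preorder Q] (P A : Set Q) : Prop :=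
  A ⊆ P ∧ (∀ a ∈ A, ∀ b ∈ A, a ≠ b → ¬ CompatIn P a b) ∧
    ∀ p ∈ P, ∃ a ∈ A, CompatIn P p a

/-- `G` is a filter on the subposet `P`. -/
def IsFilterOn {Q : Type*} [Preorder Q] (P G : Set Q) : Prop :=
  G ⊆ P ∧ G.Nonempty ∧ (∀ p ∈ G, ∀ q ∈ P, p ≤ q → q ∈ G) ∧
    ∀ p ∈ G, ∀ q ∈ G, ∃ r ∈ G, r ≤ p ∧ r ≤ q

/-- `G` is a (V-)generic filter on the subposet `P`: it meets every
maximal antichain of `P` (all of which lie in the ground model `V`). -/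
def IsGenericOn {Q : Type*} [Preorder Q] (P G : Set Q) : Prop :=
  IsFilterOn P G ∧ ∀ A : Set Q, IsMaxAntichainIn P A → (G ∩ A).Nonempty

/-- `P` is a regular suborder of `Q`: elements of `P` compatible in `Q` are
compatible in `P`, and every maximal antichain of `P` is a maximal antichain of `Q`. -/
def IsRegularSuborder {Q : Type*} [Preorder Q] (P : Set Q) : Prop :=
  (∀ p ∈ P, ∀ q ∈ P, Compat p q → CompatIn P p q) ∧
    ∀ A : Set Q, IsMaxAntichainIn P A → IsMaxAntichainIn Set.univ A

/-- `q` is a strongly `N`-generic condition: every set `D` dense in the subposet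
`N ∩ Q` (here `N` denotes the trace `N ∩ Q`, a set of conditions) is predense
in `Q` below `q`. -/
def StronglyGeneric {Q : Type*} [Preorder Q] (N : Set Q) (q : Q) : Prop :=
  ∀ D : Set Q, D ⊆ N → (∀ p ∈ N, ∃ d ∈ D, d ≤ p) →
    ∀ r, r ≤ q → ∃ d ∈ D, Compat r d

/-!
Fix `r ≤ q`. The conditions `p ∈ N` that are either incompatible with `r` or such that every
`v ≤ p` in `N` is compatible with `p ∧ r` are dense in `N`: if `p` fails, a witness `v ≤ p` is
incompatible with `p ∧ r`, hence with `r`. Strong genericity gives such a `p` compatible with `r`,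
and then `p` serves as the restriction of `p ∧ r ≤ r`.
-/

section Restriction

variable {Q : Type*} [Preorder Q]

theorem Compat.symm {x y : Q} (h : Compat x y) : Compat y x :=
  let ⟨z, hzx, hzy⟩ := h
  ⟨z, hzy, hzx⟩

/-- `meet` is total, but only its values on compatible pairs are meaningful. -/
def IsCompatMeet (meet : Q → Q → Q) : Prop :=
  ∀ x y : Q, Compat x y → meet x y ≤ x ∧ meet x y ≤ y ∧ ∀ z, z ≤ x → z ≤ y → z ≤ meet x y

/-- `p` can serve as `r↾N`. -/
def IsRestriction (N : Set Q) (r p : Q) : Prop :=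
  p ∈ N ∧ r ≤ p ∧ ∀ v ∈ N, v ≤ p → Compat r v

variable {meet : Q → Q → Q} {N : Set Q}

theorem not_compat_of_not_compat_meet (hmeet : IsCompatMeet meet) {p r v : Q} (hvp : v ≤ p)
    (h : ¬ Compat (meet p r) v) : ¬ Compat v r := by
  rintro ⟨z, hzv, hzr⟩
  have hpr : Compat p r := ⟨z, hzv.trans hvp, hzr⟩
  exact h ⟨z, (hmeet p r hpr).2.2 z (hzv.trans hvp) hzr, hzv⟩

variable (meet N) in
def decidingSet (r : Q) : Set Q :=
  {p ∈ N | ¬ Compat p r ∨ ∀ v ∈ N, v ≤ p → Compat (meet p r) v}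

theorem decidingSet_dense (hmeet : IsCompatMeet meet) (r : Q) :
    ∀ p ∈ N, ∃ d ∈ decidingSet meet N r, d ≤ p := by
  intro p hp
  by_cases hgood : ∀ v ∈ N, v ≤ p → Compat (meet p r) v
  · exact ⟨p, ⟨hp, Or.inr hgood⟩, le_rfl⟩
  · push Not at hgood
    obtain ⟨v, hvN, hvp, hbad⟩ := hgood
    exact ⟨v, ⟨hvN, Or.inl (not_compat_of_not_compat_meet hmeet hvp hbad)⟩, hvp⟩

theorem StronglyGeneric.exists_le_isRestriction (hmeet : IsCompatMeet meet) {q : Q}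
    (hq : StronglyGeneric N q) {r : Q} (hr : r ≤ q) :
    ∃ e ≤ r, ∃ p, IsRestriction N e p := by
  obtain ⟨d, ⟨hdN, hdecides⟩, hrd⟩ :=
    hq _ (fun _ hp => hp.1) (decidingSet_dense hmeet r) r hr
  have hdr : Compat d r := hrd.symm
  have hgood : ∀ v ∈ N, v ≤ d → Compat (meet d r) v := hdecides.resolve_left (not_not.2 hdr)
  obtain ⟨hmd, hmr, -⟩ := hmeet d r hdr
  exact ⟨meet d r, hmr, d, hdN, hmd, hgood⟩

end Restriction

/-- in a forcing poset with greatest lower bounds (given by `meet`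
on compatible pairs), every strongly `N`-generic condition `q` is a simple
strongly `N`-generic condition: there is a set `E` dense below `q` and a map
`r ↦ r↾N` on `E` with `r↾N ∈ N ∩ Q`, `r ≤ r↾N`, and every `v ≤ r↾N` in
`N ∩ Q` compatible with `r`. -/
theorem stmt_8 {Q : Type*} [Preorder Q]
    (meet : Q → Q → Q)
    (hmeet : ∀ x y : Q, Compat x y →
      meet x y ≤ x ∧ meet x y ≤ y ∧ ∀ z, z ≤ x → z ≤ y → z ≤ meet x y)
    (N : Set Q) (q : Q) (hq : StronglyGeneric N q) :
    ∃ (E : Set Q) (f : Q → Q),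
      (∀ r ∈ E, r ≤ q) ∧ (∀ r, r ≤ q → ∃ e ∈ E, e ≤ r) ∧
      ∀ r ∈ E, f r ∈ N ∧ r ≤ f r ∧ ∀ v ∈ N, v ≤ f r → Compat r v := by
  have : Nonempty Q := ⟨q⟩
  refine ⟨{e | e ≤ q ∧ ∃ p, IsRestriction N e p}, fun e => Classical.epsilon (IsRestriction N e),
    fun r hr => hr.1, fun r hr => ?_, fun r hr => Classical.epsilon_spec hr.2⟩
  obtain ⟨e, her, he⟩ := hq.exists_le_isRestriction hmeet hr
  exact ⟨e, ⟨her.trans hr, he⟩, her⟩
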